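/- arXiv:2206.02676 — 2 statements merged into one kernel-verified Lean document; each statement's English description precedes it below -/
import Mathlib

section
/- For every h = 1,…,n, among all symmetric tridiagonal Toeplitz matrices S = (n; d, s) whose h-th eigenvalue is zero (i.e., d + 2s cos(hπ/(n+1)) = 0), the matrix S*^𝒯 = (n; δ*, σ*) with c = cos(hπ/(n+1)), δ* = 2(n c² δ − (n−1) c σ)/(n−1+2n c²), σ* = ((n−1)σ − n c δ)/(n−1+2n c²) is the unique minimizer of ‖T − S‖_F. -/
open Real Filter

noncomputable def tridiag (n : ℕ) (d s : ℝ) : Matrix (Fin n) (Fin n) ℝ :=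
  Matrix.of fun i j =>
    if (i : ℕ) = (j : ℕ) then d
    else if (i : ℕ) + 1 = (j : ℕ) ∨ (j : ℕ) + 1 = (i : ℕ) then s else 0

noncomputable def lam (n : ℕ) (δ σ : ℝ) (h : ℕ) : ℝ :=
  δ + 2 * σ * Real.cos (h * Real.pi / (n + 1))

noncomputable def kap (n h : ℕ) : ℝ :=
  Real.sqrt (1 / (n : ℝ) + 2 / ((n : ℝ) - 1) * Real.cos (h * Real.pi / (n + 1)) ^ 2)

noncomputable def evec (n h : ℕ) : Fin n → ℝ :=
  fun k => Real.sqrt (2 / (n + 1)) * Real.sin (h * (k.1 + 1) * Real.pi / (n + 1))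

noncomputable def frobNorm {n : ℕ} (A : Matrix (Fin n) (Fin n) ℝ) : ℝ :=
  Real.sqrt (∑ i, ∑ j, A i j ^ 2)

/-!
On the line `d = -2cs` the squared Frobenius distance `n (δ - d)² + 2 (n - 1) (σ - s)²` to `T`
is a quadratic in `s` with leading coefficient `2 (n - 1) + 4 n c² > 0`. Completing the square
around its vertex `σ*` shows at once that `σ*` (with `δ* = -2cσ*`) is a minimizer and the only one.
-/

theorem tridiag_sub_tridiag (n : ℕ) (a b d s : ℝ) :
    tridiag n a b - tridiag n d s = tridiag n (a - d) (b - s) := by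
  ext i j
  simp only [tridiag, Matrix.sub_apply, Matrix.of_apply]
  split_ifs <;> ring

theorem sum_sum_ite_eq_succ (n : ℕ) (x : ℝ) :
    ∑ i : Fin n, ∑ j : Fin n, (if (i : ℕ) + 1 = j then x else 0) = (n - 1 : ℕ) * x := by
  rw [Fin.sum_univ_eq_sum_range (fun i => ∑ j : Fin n, if i + 1 = (j : ℕ) then x else 0)]
  simp only [fun i : ℕ => Fin.sum_univ_eq_sum_range (fun j => if i + 1 = j then x else 0) n,
    Finset.sum_ite_eq, Finset.mem_range]
  rcases n with _ | m
  · simp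
  · rw [Finset.sum_range_succ, Finset.sum_congr rfl fun i hi => if_pos (by simpa using hi)]
    simp

theorem sum_sum_ite_eq (n : ℕ) (x : ℝ) :
    ∑ i : Fin n, ∑ j : Fin n, (if (i : ℕ) = j then x else 0) = n * x := by
  simp [Fin.val_inj]

theorem frobNorm_tridiag (n : ℕ) (a b : ℝ) :
    frobNorm (tridiag n a b) = √(n * a ^ 2 + 2 * (n - 1 : ℕ) * b ^ 2) := by
  have hsq : ∀ i j : Fin n, tridiag n a b i j ^ 2 =
      (if (i : ℕ) = j then a ^ 2 else 0) + (if (i : ℕ) + 1 = j then b ^ 2 else 0)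
        + (if (j : ℕ) + 1 = i then b ^ 2 else 0) := by
    intro i j
    simp only [tridiag, Matrix.of_apply]
    split_ifs <;> first | omega | ring
  simp only [frobNorm, hsq, Finset.sum_add_distrib, sum_sum_ite_eq]
  rw [Finset.sum_comm (f := fun i j : Fin n => if (j : ℕ) + 1 = i then b ^ 2 else 0),
    sum_sum_ite_eq_succ]
  ring_nf

/-- `hs₀` is the normal equation: `s₀` is the critical point of the left-hand side in `s`. -/
theorem weighted_sq_add_sq_eq_vertex_add {a b k δ σ s₀ : ℝ}
    (hs₀ : s₀ * (b + a * k ^ 2) = b * σ - a * k * δ) (s : ℝ) :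
    a * (δ + k * s) ^ 2 + b * (σ - s) ^ 2 =
      a * (δ + k * s₀) ^ 2 + b * (σ - s₀) ^ 2 + (b + a * k ^ 2) * (s - s₀) ^ 2 := by
  linear_combination (2 * (s - s₀)) * hs₀

theorem stmt_5_general (n : ℕ) (hn : 2 ≤ n) (δ σ : ℝ)
    (c δs σs : ℝ)
    (hδs : δs = 2 * ((n : ℝ) * c ^ 2 * δ - ((n : ℝ) - 1) * c * σ) /
      ((n : ℝ) - 1 + 2 * (n : ℝ) * c ^ 2))
    (hσs : σs = (((n : ℝ) - 1) * σ - (n : ℝ) * c * δ) /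
      ((n : ℝ) - 1 + 2 * (n : ℝ) * c ^ 2)) :
    δs + 2 * σs * c = 0 ∧
    (∀ d s : ℝ, d + 2 * s * c = 0 →
      frobNorm (tridiag n δ σ - tridiag n δs σs) ≤
        frobNorm (tridiag n δ σ - tridiag n d s)) ∧
    (∀ d s : ℝ, d + 2 * s * c = 0 →
      frobNorm (tridiag n δ σ - tridiag n d s) =
        frobNorm (tridiag n δ σ - tridiag n δs σs) →
      d = δs ∧ s = σs) := by
  have hcast : ((n - 1 : ℕ) : ℝ) = n - 1 := by norm_num [Nat.cast_sub (by omega : 1 ≤ n)]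
  have hnR : (2 : ℝ) ≤ n := by exact_mod_cast hn
  have hD : 0 < 2 * ((n : ℝ) - 1) + n * (2 * c) ^ 2 := by nlinarith [sq_nonneg c]
  have hDne : (n : ℝ) - 1 + 2 * n * c ^ 2 ≠ 0 := by nlinarith
  have hvertex : σs * (2 * ((n : ℝ) - 1) + n * (2 * c) ^ 2) =
      2 * ((n : ℝ) - 1) * σ - n * (2 * c) * δ := by
    rw [hσs, div_mul_eq_mul_div, div_eq_iff hDne]; ring
  have hfeasible : δs + 2 * σs * c = 0 := by
    rw [hδs, hσs]; field_simp; ring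
  have hdist : ∀ d s, d + 2 * s * c = 0 → frobNorm (tridiag n δ σ - tridiag n d s) =
      √(n * (δ + 2 * c * s) ^ 2 + 2 * ((n : ℝ) - 1) * (σ - s) ^ 2) := by
    intro d s hds
    rw [tridiag_sub_tridiag, frobNorm_tridiag, hcast, show δ - d = δ + 2 * c * s by linarith]
  have hmin_nonneg : 0 ≤ n * (δ + 2 * c * σs) ^ 2 + 2 * ((n : ℝ) - 1) * (σ - σs) ^ 2 := by
    nlinarith [sq_nonneg (δ + 2 * c * σs), sq_nonneg (σ - σs)]
  have hsplit := weighted_sq_add_sq_eq_vertex_add hvertex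
  have hdist₀ := hdist δs σs hfeasible
  refine ⟨hfeasible, fun d s hds => ?_, fun d s hds heq => ?_⟩
  · rw [hdist d s hds, hdist₀, hsplit s]
    exact Real.sqrt_le_sqrt (le_add_of_nonneg_right (mul_nonneg hD.le (sq_nonneg _)))
  · rw [hdist d s hds, hdist₀, hsplit s,
      Real.sqrt_inj (add_nonneg hmin_nonneg (mul_nonneg hD.le (sq_nonneg _))) hmin_nonneg,
      add_eq_left, mul_eq_zero, pow_eq_zero_iff two_ne_zero, sub_eq_zero] at heq
    have hs : s = σs := heq.resolve_left hD.ne'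
    exact ⟨by subst hs; linarith, hs⟩

/-- among all symmetric tridiagonal Toeplitz matrices `(n; d, s)` whose `h`-th
eigenvalue vanishes (`d + 2sc = 0`), the matrix `S*^𝒯 = (n; δ*, σ*)` is the unique minimizer of
the Frobenius distance to `T`. -/
theorem stmt_5 (n : ℕ) (hn : 2 ≤ n) (δ σ : ℝ) (h : ℕ) (h1 : 1 ≤ h) (hh : h ≤ n)
    (c δs σs : ℝ) (hc : c = Real.cos (h * Real.pi / (n + 1)))
    (hδs : δs = 2 * ((n : ℝ) * c ^ 2 * δ - ((n : ℝ) - 1) * c * σ) /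
      ((n : ℝ) - 1 + 2 * (n : ℝ) * c ^ 2))
    (hσs : σs = (((n : ℝ) - 1) * σ - (n : ℝ) * c * δ) /
      ((n : ℝ) - 1 + 2 * (n : ℝ) * c ^ 2)) :
    δs + 2 * σs * c = 0 ∧
    (∀ d s : ℝ, d + 2 * s * c = 0 →
      frobNorm (tridiag n δ σ - tridiag n δs σs) ≤
        frobNorm (tridiag n δ σ - tridiag n d s)) ∧
    (∀ d s : ℝ, d + 2 * s * c = 0 →
      frobNorm (tridiag n δ σ - tridiag n d s) =
        frobNorm (tridiag n δ σ - tridiag n δs σs) →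
      d = δs ∧ s = σs) :=
  stmt_5_general n hn δ σ c δs σs hδs hσs
end

section
/- Let h ∈ {1,…,n} satisfy |λ_h|/κ(h) ≤ |λ_j|/κ(j) for all j, and let c = cos(hπ/(n+1)), δ* = 2(n c² δ − (n−1) c σ)/(n−1+2n c²), σ* = ((n−1)σ − n c δ)/(n−1+2n c²), S*^𝒯 = (n; δ*, σ*). Then ‖T − S*^𝒯‖₂ = |λ_h| · (n−1 + 2n|c| cos(π/(n+1))) / (n−1 + 2n c²), and consequently the structured distance to singularity in the spectral norm satisfies min_{j=1,…,n} |λ_j| ≤ d₂^𝒯(T) = min_{S ∈ 𝒮 ∩ 𝒯} ‖T − S‖₂ ≤ |λ_h| · (n−1 + 2n|c| cos(π/(n+1))) / (n−1 + 2n c²). -/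
open Real Filter

/-- Spectral norm (largest singular value) of a real matrix, as the operator norm of the induced
map on Euclidean space. -/
noncomputable def specNorm {n : ℕ} (A : Matrix (Fin n) (Fin n) ℝ) : ℝ :=
  ‖LinearMap.toContinuousLinearMap (Matrix.toEuclideanLin A)‖

/-!
The sampled sines `evec n j` (`1 ≤ j ≤ n`) are eigenvectors of every `tridiag n d s`, with
eigenvalue `lam n d s j`; being independent, they show that the spectrum of `tridiag n d s` is
exactly `{lam n d s j}`. The matrix is symmetric, so its spectral norm is its spectral radius, and
`|cos (jπ/(n+1))| ≤ cos (π/(n+1))`, with equality at `j = 1` and `j = n`, evaluates it to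
`|d| + 2|s| cos (π/(n+1))`. Since `T - S*` is again tridiagonal Toeplitz, this gives the norm
identity. `S*` is singular because `lam n δs σs h = 0`, so `d₂` is at most that norm. Conversely a
singular `S = tridiag n d s` has some `lam n d s j = 0`, hence
`‖T - S‖₂ ≥ |lam n δ σ j - lam n d s j| = |λ_j|`. The minimum defining `d₂` exists because
`‖T - tridiag n d s‖₂` is a continuous, coercive function of `(d, s)` on the closed set of singular
parameters.
-/

open Matrix

theorem IsSelfAdjoint.norm_le_iff_forall_mem_spectrum {𝕜 E : Type*} [RCLike 𝕜]
    [NormedAddCommGroup E] [InnerProductSpace 𝕜 E] [CompleteSpace E] [Nontrivial E]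
    {T : E →L[𝕜] E} (hT : IsSelfAdjoint T) {B : ℝ} (hB : 0 ≤ B) :
    ‖T‖ ≤ B ↔ ∀ μ ∈ spectrum 𝕜 T, ‖μ‖ ≤ B := by
  refine ⟨fun h μ hμ => (spectrum.norm_le_norm_of_mem hμ).trans h, fun h => ?_⟩
  have : spectralRadius 𝕜 T ≤ ENNReal.ofReal B :=
    iSup₂_le fun μ hμ => by
      rw [← ENNReal.ofReal_coe_nnreal, coe_nnnorm]
      exact ENNReal.ofReal_le_ofReal (h μ hμ)
  rwa [T.spectralRadius_eq_nnnorm hT, ← ENNReal.ofReal_coe_nnreal, coe_nnnorm,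
    ENNReal.ofReal_le_ofReal_iff hB] at this

theorem Module.End.spectrum_eq_range_of_basis {K V ι : Type*} [Field K] [AddCommGroup V]
    [Module K V] [Fintype ι] [DecidableEq ι] {f : Module.End K V} (b : Module.Basis ι K V)
    (μ : ι → K) (hb : ∀ i, f (b i) = μ i • b i) : spectrum K f = Set.range μ := by
  have : LinearMap.toMatrix b b f = Matrix.diagonal μ := by
    ext i j
    rw [LinearMap.toMatrix_apply, hb, map_smul, b.repr_self, Matrix.diagonal_apply]
    by_cases hij : i = j <;> simp [hij]
  rw [← LinearMap.spectrum_toMatrix f b, this, spectrum_diagonal]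

theorem IsClosed.exists_isMinOn_of_norm_le {E : Type*} [NormedAddCommGroup E] [ProperSpace E]
    {K : Set E} (hK : IsClosed K) (hne : K.Nonempty) {f : E → ℝ} (hf : Continuous f) (C : ℝ)
    (hfC : ∀ x, ‖x‖ ≤ f x + C) : ∃ x ∈ K, IsMinOn f K x := by
  obtain ⟨x₀, hx₀⟩ := hne
  refine hf.continuousOn.exists_isMinOn' hK hx₀ (Filter.Eventually.filter_mono inf_le_left ?_)
  filter_upwards [(isCompact_closedBall (0 : E) (f x₀ + C)).compl_mem_cocompact] with x hx
  have : f x₀ + C < ‖x‖ := by simpa using hx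
  linarith [hfC x]

theorem tridiag_mulVec_of_recurrence {n : ℕ} (d s c : ℝ) {w : ℕ → ℝ} (hw0 : w 0 = 0)
    (hwn : w (n + 1) = 0) (hrec : ∀ k, w k + w (k + 2) = 2 * c * w (k + 1)) :
    tridiag n d s *ᵥ (fun k : Fin n => w (k + 1)) =
      (d + 2 * s * c) • fun k : Fin n => w (k + 1) := by
  funext i
  obtain ⟨a, ha⟩ := i
  -- Row `a` picks out `w a`, `w (a + 1)`, `w (a + 2)`; reindexing by `m = k + 1` over
  -- `range (n + 2)` is harmless because `w 0 = w (n + 1) = 0`.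
  set g : ℕ → ℝ := fun m => ((if m = a then s else 0) + (if m = a + 1 then d else 0) +
    (if m = a + 2 then s else 0)) * w m
  have hterm : ∀ k, (if a = k then d else if a + 1 = k ∨ k + 1 = a then s else 0) * w (k + 1)
      = g (k + 1) := by
    intro k
    simp only [g]
    split_ifs <;> first | omega | ring
  have hsum : ∑ m ∈ Finset.range (n + 2), g m = s * w a + d * w (a + 1) + s * w (a + 2) := by
    simp only [g, add_mul, ite_mul, zero_mul, Finset.sum_add_distrib, Finset.sum_ite_eq',
      Finset.mem_range]
    rw [if_pos (by omega), if_pos (by omega), if_pos (by omega)]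
  calc (tridiag n d s *ᵥ fun k => w (k + 1)) ⟨a, ha⟩
      = ∑ k ∈ Finset.range n, g (k + 1) := by
        simp only [Matrix.mulVec, dotProduct, tridiag, Matrix.of_apply]
        rw [Fin.sum_univ_eq_sum_range (fun k =>
          (if a = k then d else if a + 1 = k ∨ k + 1 = a then s else 0) * w (k + 1)) n]
        exact Finset.sum_congr rfl fun k _ => hterm k
    _ = ∑ m ∈ Finset.range (n + 2), g m := by
        have hg0 : g 0 = 0 := by simp [g, hw0]
        have hgn : g (n + 1) = 0 := by simp [g, hwn]
        rw [Finset.sum_range_succ, Finset.sum_range_succ', hg0, hgn, add_zero, add_zero]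
    _ = _ := by
        rw [hsum, Pi.smul_apply, smul_eq_mul]
        linear_combination s * hrec a

theorem tridiag_mulVec_evec (n : ℕ) (d s : ℝ) (j : ℕ) :
    tridiag n d s *ᵥ evec n j = lam n d s j • evec n j := by
  set w : ℕ → ℝ := fun m => Real.sqrt (2 / (n + 1)) * Real.sin (j * m * π / (n + 1))
  have hevec : evec n j = fun k : Fin n => w (k + 1) := by
    funext k
    simp [evec, w]
  have hwn : w (n + 1) = 0 := by
    have : (j : ℝ) * ((n + 1 : ℕ) : ℝ) * π / (n + 1) = j * π := by
      push_cast
      field_simp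
    simp only [w, this, Real.sin_nat_mul_pi, mul_zero]
  have hrec : ∀ k, w k + w (k + 2) = 2 * Real.cos (j * π / (n + 1)) * w (k + 1) := by
    intro k
    have hsub : (j : ℝ) * (k : ℕ) * π / (n + 1) =
        j * ((k + 1 : ℕ) : ℝ) * π / (n + 1) - j * π / (n + 1) := by push_cast; ring
    have hadd : (j : ℝ) * ((k + 2 : ℕ) : ℝ) * π / (n + 1) =
        j * ((k + 1 : ℕ) : ℝ) * π / (n + 1) + j * π / (n + 1) := by push_cast; ring
    simp only [w, hsub, hadd, Real.sin_sub, Real.sin_add]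
    ring
  rw [hevec]
  exact tridiag_mulVec_of_recurrence d s _ (by simp [w]) hwn hrec

theorem mem_Icc_nat_mul_pi_div {n j : ℕ} (hj1 : 1 ≤ j) (hjn : j ≤ n) :
    (j : ℝ) * π / (n + 1) ∈ Set.Icc (π / (n + 1)) (π - π / (n + 1)) := by
  have hj1' : (1 : ℝ) ≤ j := by exact_mod_cast hj1
  have hjn' : (j : ℝ) ≤ n := by exact_mod_cast hjn
  have hπn : π - π / (n + 1) = n * π / (n + 1) := by field_simp; ring
  rw [hπn]
  constructor <;> gcongr
  nlinarith [Real.pi_pos]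

theorem evec_ne_zero {n j : ℕ} (hj1 : 1 ≤ j) (hjn : j ≤ n) : evec n j ≠ 0 := by
  have hθ := mem_Icc_nat_mul_pi_div hj1 hjn
  have hpos : 0 < evec n j ⟨0, by omega⟩ := by
    have hsin : 0 < Real.sin (j * π / (n + 1)) := by
      apply Real.sin_pos_of_pos_of_lt_pi <;>
        nlinarith [hθ.1, hθ.2, show 0 < π / (n + 1) by positivity]
    simp only [evec, CharP.cast_eq_zero, zero_add, mul_one]
    positivity
  intro h
  simp [h] at hpos

theorem abs_cos_le_cos_of_mem_Icc {a θ : ℝ} (ha : 0 ≤ a) (hθ : θ ∈ Set.Icc a (π - a)) :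
    |Real.cos θ| ≤ Real.cos a := by
  obtain ⟨haθ, hθa⟩ := hθ
  rw [abs_le]
  constructor
  · have := Real.cos_le_cos_of_nonneg_of_le_pi (by linarith) (by linarith) hθa
    rw [Real.cos_pi_sub] at this
    linarith
  · exact Real.cos_le_cos_of_nonneg_of_le_pi ha (by linarith) haθ

theorem linearIndependent_evec (n : ℕ) :
    LinearIndependent ℝ fun i : Fin n => evec n (i + 1) := by
  refine Module.End.eigenvectors_linearIndependent' (Matrix.toLin' (tridiag n 0 1))
    (fun i : Fin n => lam n 0 1 (i + 1)) ?_ _ fun i =>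
      ⟨Module.End.mem_eigenspace_iff.2 ?_, evec_ne_zero (by omega) i.2⟩
  · intro i i' hii'
    have hθ : ∀ i : Fin n, ((i + 1 : ℕ) : ℝ) * π / (n + 1) ∈ Set.Icc 0 π := fun i =>
      Set.Icc_subset_Icc (by positivity) (by linarith [show 0 < π / (n + 1) by positivity])
        (mem_Icc_nat_mul_pi_div (by omega) i.2)
    have hcos := Real.injOn_cos (hθ i) (hθ i') (by simpa [lam] using hii')
    have : ((i + 1 : ℕ) : ℝ) = ((i' + 1 : ℕ) : ℝ) := by
      field_simp at hcos
      exact hcos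
    have : (i : ℕ) + 1 = i' + 1 := by exact_mod_cast this
    exact Fin.ext (by omega)
  · rw [Matrix.toLin'_apply, tridiag_mulVec_evec]

theorem spectrum_tridiag (n : ℕ) (d s : ℝ) :
    spectrum ℝ (tridiag n d s) = Set.range fun i : Fin n => lam n d s (i + 1) := by
  classical
  rw [← Matrix.spectrum_toLin']
  refine Module.End.spectrum_eq_range_of_basis
    (basisOfPiSpaceOfLinearIndependent (linearIndependent_evec n)) _ fun i => ?_
  rw [coe_basisOfPiSpaceOfLinearIndependent, Matrix.toLin'_apply, tridiag_mulVec_evec]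

theorem specNorm_le_iff_of_isHermitian {n : ℕ} [NeZero n] {A : Matrix (Fin n) (Fin n) ℝ}
    (hA : A.IsHermitian) {B : ℝ} (hB : 0 ≤ B) :
    specNorm A ≤ B ↔ ∀ μ ∈ spectrum ℝ A, |μ| ≤ B := by
  have hT : IsSelfAdjoint (LinearMap.toContinuousLinearMap (Matrix.toEuclideanLin A)) :=
    ContinuousLinearMap.isSelfAdjoint_iff_isSymmetric.2
      (Matrix.isSymmetric_toEuclideanLin_iff.2 hA)
  rw [specNorm, IsSelfAdjoint.norm_le_iff_forall_mem_spectrum hT hB,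
    ContinuousLinearMap.spectrum_eq, LinearMap.coe_toContinuousLinearMap, Matrix.toEuclideanLin,
    Matrix.spectrum_toLpLin]
  rfl

theorem isHermitian_tridiag (n : ℕ) (d s : ℝ) : (tridiag n d s).IsHermitian := by
  ext i j
  simp only [Matrix.conjTranspose_apply, star_trivial, tridiag, Matrix.of_apply]
  split_ifs <;> first | rfl | omega

theorem abs_lam_le {n j : ℕ} (hj1 : 1 ≤ j) (hjn : j ≤ n) (d s : ℝ) :
    |lam n d s j| ≤ |d| + 2 * |s| * Real.cos (π / (n + 1)) := by
  have hcos := abs_cos_le_cos_of_mem_Icc (by positivity) (mem_Icc_nat_mul_pi_div hj1 hjn)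
  calc |lam n d s j| ≤ |d| + 2 * |s| * |Real.cos (j * π / (n + 1))| := by
        rw [lam]
        grw [abs_add_le, abs_mul, abs_mul, abs_two]
    _ ≤ _ := by gcongr

theorem lam_self (n : ℕ) (d s : ℝ) : lam n d s n = d - 2 * s * Real.cos (π / (n + 1)) := by
  have : (n : ℝ) * π / (n + 1) = π - π / (n + 1) := by field_simp; ring
  rw [lam, this, Real.cos_pi_sub]
  ring

theorem specNorm_tridiag {n : ℕ} (hn : 1 ≤ n) (d s : ℝ) :
    specNorm (tridiag n d s) = |d| + 2 * |s| * Real.cos (π / (n + 1)) := by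
  have : NeZero n := ⟨by omega⟩
  have hB : 0 ≤ |d| + 2 * |s| * Real.cos (π / (n + 1)) :=
    (abs_nonneg _).trans (abs_lam_le le_rfl hn d s)
  have hspec : ∀ B, 0 ≤ B →
      (specNorm (tridiag n d s) ≤ B ↔ ∀ i : Fin n, |lam n d s (i + 1)| ≤ B) := fun B hB => by
    rw [specNorm_le_iff_of_isHermitian (isHermitian_tridiag n d s) hB, spectrum_tridiag,
      Set.forall_mem_range]
  apply le_antisymm
  · exact (hspec _ hB).2 fun i => abs_lam_le (by omega) i.2 d s
  · have hlam := (hspec (specNorm (tridiag n d s)) (norm_nonneg _)).1 le_rfl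
    have hfirst : |d + 2 * s * Real.cos (π / (n + 1))| ≤ specNorm (tridiag n d s) := by
      simpa [lam] using hlam ⟨0, by omega⟩
    have hlast : |d - 2 * s * Real.cos (π / (n + 1))| ≤ specNorm (tridiag n d s) := by
      have := hlam ⟨n - 1, by omega⟩
      rwa [Nat.sub_add_cancel hn, lam_self] at this
    rw [abs_le] at hfirst hlast
    rcases abs_cases d with ⟨hd, -⟩ | ⟨hd, -⟩ <;> rcases abs_cases s with ⟨hs, -⟩ | ⟨hs, -⟩ <;>
      rw [hd, hs] <;> linarith

theorem tridiag_sub (n : ℕ) (d s d' s' : ℝ) :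
    tridiag n d s - tridiag n d' s' = tridiag n (d - d') (s - s') := by
  ext i j
  simp only [Matrix.sub_apply, tridiag, Matrix.of_apply]
  split_ifs <;> ring

theorem det_tridiag_eq_zero_iff (n : ℕ) (d s : ℝ) :
    (tridiag n d s).det = 0 ↔ ∃ j ∈ Finset.Icc 1 n, lam n d s j = 0 := by
  rw [← not_ne_iff, ← isUnit_iff_ne_zero, ← Matrix.isUnit_iff_isUnit_det,
    ← spectrum.zero_mem_iff ℝ, spectrum_tridiag]
  constructor
  · rintro ⟨i, hi⟩
    exact ⟨i + 1, Finset.mem_Icc.2 ⟨by omega, i.2⟩, hi⟩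
  · rintro ⟨j, hj, hj0⟩
    obtain ⟨hj1, hjn⟩ := Finset.mem_Icc.1 hj
    exact ⟨⟨j - 1, by omega⟩, by simpa [Nat.sub_add_cancel hj1] using hj0⟩

theorem inf'_abs_lam_le_specNorm_sub {n : ℕ} (hne : (Finset.Icc 1 n).Nonempty) (δ σ : ℝ)
    {d s : ℝ} (hS : (tridiag n d s).det = 0) :
    (Finset.Icc 1 n).inf' hne (fun j => |lam n δ σ j|) ≤
      specNorm (tridiag n δ σ - tridiag n d s) := by
  obtain ⟨j, hj, hj0⟩ := (det_tridiag_eq_zero_iff n d s).1 hS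
  obtain ⟨hj1, hjn⟩ := Finset.mem_Icc.1 hj
  have hlam : lam n δ σ j = lam n (δ - d) (σ - s) j := by
    rw [lam, lam] at *
    linear_combination hj0
  calc (Finset.Icc 1 n).inf' hne (fun j => |lam n δ σ j|) ≤ |lam n δ σ j| :=
        Finset.inf'_le _ hj
    _ ≤ specNorm (tridiag n δ σ - tridiag n d s) := by
        rw [hlam, tridiag_sub, specNorm_tridiag (by omega)]
        exact abs_lam_le hj1 hjn _ _

theorem exists_isLeast_specNorm_sub_singular_tridiag {n : ℕ} (hn : 2 ≤ n) (δ σ : ℝ) :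
    ∃ d2 : ℝ, IsLeast {r : ℝ | ∃ S : Matrix (Fin n) (Fin n) ℝ,
      S.det = 0 ∧ (∃ d s : ℝ, S = tridiag n d s) ∧ r = specNorm (tridiag n δ σ - S)} d2 := by
  set a := π / (n + 1)
  set f : ℝ × ℝ → ℝ := fun p => |δ - p.1| + 2 * |σ - p.2| * Real.cos a
  have hf : ∀ d s, specNorm (tridiag n δ σ - tridiag n d s) = f (d, s) := fun d s => by
    rw [tridiag_sub, specNorm_tridiag (by omega)]
  set K : Set (ℝ × ℝ) := {p | (tridiag n p.1 p.2).det = 0}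
  have hK : IsClosed K := by
    have htri : Continuous fun p : ℝ × ℝ => tridiag n p.1 p.2 := by
      refine continuous_pi fun i => continuous_pi fun j => ?_
      simp only [tridiag, Matrix.of_apply]
      split_ifs <;> fun_prop
    exact isClosed_eq htri.matrix_det continuous_const
  have hKne : K.Nonempty :=
    ⟨0, (det_tridiag_eq_zero_iff n 0 0).2 ⟨1, by simp; omega, by simp [lam]⟩⟩
  have hcos : 1 / 2 ≤ Real.cos a := by
    have h3 : (3 : ℝ) ≤ n + 1 := by norm_cast; omega
    rw [← Real.cos_pi_div_three]
    apply Real.cos_le_cos_of_nonneg_of_le_pi (by positivity) (by linarith [Real.pi_pos])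
    exact div_le_div_of_nonneg_left Real.pi_pos.le (by norm_num) h3
  have hfC : ∀ p, ‖p‖ ≤ f p + ‖((δ, σ) : ℝ × ℝ)‖ := by
    intro p
    have hsub : ‖p - (δ, σ)‖ ≤ f p := by
      rw [Prod.norm_def, Prod.fst_sub, Prod.snd_sub, Real.norm_eq_abs, Real.norm_eq_abs,
        abs_sub_comm p.1, abs_sub_comm p.2]
      refine max_le ?_ ?_ <;> simp only [f] <;>
        nlinarith [abs_nonneg (δ - p.1), abs_nonneg (σ - p.2)]
    linarith [norm_le_insert' p (δ, σ)]
  obtain ⟨p, hpK, hpmin⟩ := hK.exists_isMinOn_of_norm_le hKne (by fun_prop) _ hfC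
  refine ⟨f p, ⟨tridiag n p.1 p.2, hpK, ⟨p.1, p.2, rfl⟩, (hf p.1 p.2).symm⟩, ?_⟩
  rintro r ⟨S, hS, ⟨d, s, rfl⟩, rfl⟩
  rw [hf]
  exact hpmin (show (d, s) ∈ K from hS)

/-- if `h` minimizes `|λ_j|/κ(j)`, then
`‖T − S*^𝒯‖₂ = |λ_h|(n−1+2n|c|cos(π/(n+1)))/(n−1+2nc²)`, and the structured distance to
singularity in the spectral norm satisfies `min_j |λ_j| ≤ d₂^𝒯(T) ≤` that same bound. -/
theorem stmt_10 (n : ℕ) (hn : 2 ≤ n) (δ σ : ℝ)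
    (h : ℕ) (h1 : 1 ≤ h) (hh : h ≤ n)
    (c δs σs : ℝ) (hc : c = Real.cos (h * Real.pi / (n + 1)))
    (hδs : δs = 2 * ((n : ℝ) * c ^ 2 * δ - ((n : ℝ) - 1) * c * σ) /
      ((n : ℝ) - 1 + 2 * (n : ℝ) * c ^ 2))
    (hσs : σs = (((n : ℝ) - 1) * σ - (n : ℝ) * c * δ) /
      ((n : ℝ) - 1 + 2 * (n : ℝ) * c ^ 2)) :
    specNorm (tridiag n δ σ - tridiag n δs σs) =
      |lam n δ σ h| * ((n : ℝ) - 1 + 2 * (n : ℝ) * |c| * Real.cos (Real.pi / (n + 1))) /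
        ((n : ℝ) - 1 + 2 * (n : ℝ) * c ^ 2) ∧
    ∃ d2 : ℝ,
      IsLeast {r : ℝ | ∃ S : Matrix (Fin n) (Fin n) ℝ,
          S.det = 0 ∧ (∃ d s : ℝ, S = tridiag n d s) ∧
          r = specNorm (tridiag n δ σ - S)} d2 ∧
      ((Finset.Icc 1 n).inf' (Finset.nonempty_Icc.mpr (by omega))
        fun j => |lam n δ σ j|) ≤ d2 ∧
      d2 ≤ |lam n δ σ h| * ((n : ℝ) - 1 + 2 * (n : ℝ) * |c| * Real.cos (Real.pi / (n + 1))) /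
        ((n : ℝ) - 1 + 2 * (n : ℝ) * c ^ 2) := by
  have hn' : (2 : ℝ) ≤ n := by exact_mod_cast hn
  have hD : 0 < (n : ℝ) - 1 + 2 * (n : ℝ) * c ^ 2 := by nlinarith [sq_nonneg c]
  have hD0 := hD.ne'
  have hlam : lam n δ σ h = δ + 2 * σ * c := by rw [lam, hc]
  have hδ : δ - δs = ((n : ℝ) - 1) * lam n δ σ h / ((n : ℝ) - 1 + 2 * (n : ℝ) * c ^ 2) := by
    rw [hδs, hlam]; field_simp; ring
  have hσ : σ - σs = (n : ℝ) * c * lam n δ σ h / ((n : ℝ) - 1 + 2 * (n : ℝ) * c ^ 2) := by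
    rw [eq_div_iff hD0, hσs, hlam, sub_mul, div_mul_cancel₀ _ hD0]; ring
  have hnorm : specNorm (tridiag n δ σ - tridiag n δs σs) =
      |lam n δ σ h| * ((n : ℝ) - 1 + 2 * (n : ℝ) * |c| * Real.cos (Real.pi / (n + 1))) /
        ((n : ℝ) - 1 + 2 * (n : ℝ) * c ^ 2) := by
    rw [tridiag_sub, specNorm_tridiag (by omega), hδ, hσ, abs_div, abs_div, abs_mul, abs_mul,
      abs_mul, abs_of_pos hD, abs_of_nonneg (by linarith : (0 : ℝ) ≤ n - 1), Nat.abs_cast]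
    ring
  have hsing : (tridiag n δs σs).det = 0 :=
    (det_tridiag_eq_zero_iff n δs σs).2 ⟨h, Finset.mem_Icc.2 ⟨h1, hh⟩, by
      rw [lam, ← hc, hδs, hσs]; field_simp; ring⟩
  obtain ⟨d2, hd2⟩ := exists_isLeast_specNorm_sub_singular_tridiag hn δ σ
  obtain ⟨S, hS, ⟨d, s, rfl⟩, hd2S⟩ := hd2.1
  exact ⟨hnorm, d2, hd2, hd2S ▸ inf'_abs_lam_le_specNorm_sub _ δ σ hS,
    hnorm ▸ hd2.2 ⟨_, hsing, ⟨δs, σs, rfl⟩, rfl⟩⟩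
end
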